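/- arXiv:1909.04406 — 3 statements merged into one kernel-verified Lean document; each statement's English description precedes it below -/
import Mathlib

section
/- Fix τ ∈ ℝ. Then the rescaled densities g_n(τ) := (1/√(n−2)) · h_n( π/2 + τ/√(n−2) ), defined for all integers n large enough that π/2 + τ/√(n−2) ∈ [0, π], converge as n → ∞ to the standard normal density (1/√(2π)) · e^{−τ²/2}. -/
open Real Filter

/-- The angle density `h_p(θ) = (1/√π)·(Γ(p/2)/Γ((p−1)/2))·(sin θ)^{p−2}` on `[0, π]`. -/
noncomputable def hDensity (p : ℕ) (θ : ℝ) : ℝ :=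
  (1 / Real.sqrt π) * (Real.Gamma ((p : ℝ) / 2) / Real.Gamma (((p : ℝ) - 1) / 2)) *
    Real.sin θ ^ (p - 2)

/-! Since `sin (π/2 + s) = cos s`, the rescaled density is
`(1/√π) · Γ(n/2) / (Γ((n-1)/2) · √(n-2)) · cos (τ/√(n-2)) ^ (n-2)`.
Log-convexity of `Γ` gives Gautschi's bounds `x Γ(x) / √(x+1/2) ≤ Γ(x+1/2) ≤ Γ(x) √x`, so the
Gamma factor tends to `1/√2`; and `cos s = 1 - s²/2 + O(s⁴)` makes `m (cos (τ/√m) - 1) → -τ²/2`,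
whence `cos (τ/√m) ^ m → exp (-τ²/2)`. -/

open Topology

namespace Real

theorem Gamma_add_half_le_mul_sqrt {x : ℝ} (hx : 0 < x) : Gamma (x + 1 / 2) ≤ Gamma x * √x := by
  have h := Gamma_mul_add_mul_le_rpow_Gamma_mul_rpow_Gamma hx (by linarith : 0 < x + 1)
    (by norm_num : (0 : ℝ) < 1 / 2) (by norm_num : (0 : ℝ) < 1 / 2) (by norm_num)
  have hG : 0 ≤ Gamma x := (Gamma_pos_of_pos hx).le
  rwa [show 1 / 2 * x + 1 / 2 * (x + 1) = x + 1 / 2 by ring, Gamma_add_one hx.ne',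
    mul_rpow hx.le hG, ← sqrt_eq_rpow, ← sqrt_eq_rpow, mul_left_comm, mul_self_sqrt hG,
    mul_comm] at h

theorem mul_Gamma_le_Gamma_add_half_mul_sqrt {x : ℝ} (hx : 0 < x) :
    x * Gamma x ≤ Gamma (x + 1 / 2) * √(x + 1 / 2) := by
  have h := Gamma_add_half_le_mul_sqrt (by linarith : 0 < x + 1 / 2)
  rwa [add_assoc, show (1 / 2 + 1 / 2 : ℝ) = 1 by norm_num, Gamma_add_one hx.ne'] at h

theorem tendsto_Gamma_add_half_div_Gamma_mul_sqrt :
    Tendsto (fun x => Gamma (x + 1 / 2) / (Gamma x * √x)) atTop (𝓝 1) := by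
  have hlower : Tendsto (fun x : ℝ => (√(1 + (2 * x)⁻¹))⁻¹) atTop (𝓝 1) := by
    have h := ((tendsto_inv_atTop_zero.comp (tendsto_id.const_mul_atTop two_pos)).const_add
      (1 : ℝ)).sqrt.inv₀ (by norm_num)
    simpa using h
  refine tendsto_of_tendsto_of_tendsto_of_le_of_le' hlower tendsto_const_nhds ?_ ?_
  all_goals filter_upwards [eventually_gt_atTop 0] with x hx
  · have h := mul_Gamma_le_Gamma_add_half_mul_sqrt hx
    have hs : √(x + 1 / 2) = √(1 + (2 * x)⁻¹) * √x := by
      rw [← sqrt_mul (by positivity)]; congr 1; field_simp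
    rw [hs] at h
    rw [inv_le_iff_one_le_mul₀' (by positivity), ← mul_div_assoc, one_le_div (by positivity)]
    refine le_of_mul_le_mul_left ?_ (sqrt_pos.2 hx)
    calc √x * (Gamma x * √x) = x * Gamma x := by rw [mul_left_comm, mul_self_sqrt hx.le, mul_comm]
      _ ≤ _ := h
      _ = _ := by ring
  · rw [div_le_one (mul_pos (Gamma_pos_of_pos hx) (sqrt_pos.2 hx))]
    exact Gamma_add_half_le_mul_sqrt hx

theorem tendsto_Gamma_half_div_Gamma_half_sub_div_sqrt :
    Tendsto (fun t => Gamma (t / 2) / Gamma ((t - 1) / 2) / √(t - 2)) atTop (𝓝 (√2)⁻¹) := by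
  have hsub : Tendsto (fun t : ℝ => t - 2) atTop atTop :=
    tendsto_atTop_add_const_right _ _ tendsto_id
  have hx : Tendsto (fun t : ℝ => (t - 1) / 2) atTop atTop :=
    (tendsto_atTop_add_const_right _ _ tendsto_id).atTop_div_const two_pos
  have hscale : Tendsto (fun t : ℝ => √(2⁻¹ + (2 * (t - 2))⁻¹)) atTop (𝓝 (√2)⁻¹) := by
    have h := ((tendsto_inv_atTop_zero.comp (hsub.const_mul_atTop two_pos)).const_add 2⁻¹).sqrt
    simpa [sqrt_inv] using h
  have h := (tendsto_Gamma_add_half_div_Gamma_mul_sqrt.comp hx).mul hscale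
  rw [one_mul] at h
  refine h.congr' ?_
  filter_upwards [eventually_gt_atTop 2] with t ht
  have hx0 : 0 < (t - 1) / 2 := by linarith
  rw [Function.comp_apply, show (t - 1) / 2 + 1 / 2 = t / 2 by ring,
    show 2⁻¹ + (2 * (t - 2))⁻¹ = (t - 1) / 2 / (t - 2) by field_simp; ring,
    sqrt_div hx0.le]
  have hsx := sqrt_pos.2 hx0
  have hst := sqrt_pos.2 (by linarith : 0 < t - 2)
  field_simp

theorem tendsto_mul_cos_div_sqrt_sub_one (τ : ℝ) :
    Tendsto (fun t => t * (cos (τ / √t) - 1)) atTop (𝓝 (-τ ^ 2 / 2)) := by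
  rw [← tendsto_sub_nhds_zero_iff]
  have hbound : Tendsto (fun t : ℝ => τ ^ 4 * (5 / 96) / t) atTop (𝓝 0) :=
    tendsto_const_nhds.div_atTop tendsto_id
  refine squeeze_zero_norm' ?_ hbound
  filter_upwards [eventually_ge_atTop (τ ^ 2), eventually_gt_atTop 0] with t ht ht0
  have hsmall : |τ / √t| ≤ 1 := by
    rw [abs_div, abs_of_pos (sqrt_pos.2 ht0), div_le_one (sqrt_pos.2 ht0)]
    exact abs_le_sqrt ht
  have hsq : (τ / √t) ^ 2 = τ ^ 2 / t := by rw [div_pow, sq_sqrt ht0.le]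
  calc ‖t * (cos (τ / √t) - 1) - -τ ^ 2 / 2‖
      = t * |cos (τ / √t) - (1 - (τ / √t) ^ 2 / 2)| := by
        rw [norm_eq_abs, ← abs_of_pos ht0, ← abs_mul, abs_of_pos ht0, hsq]
        congr 1; field_simp; ring
    _ ≤ t * (|τ / √t| ^ 4 * (5 / 96)) := by gcongr; exact cos_bound hsmall
    _ = τ ^ 4 * (5 / 96) / t := by
        rw [(by decide : Even 4).pow_abs, show (τ / √t) ^ 4 = ((τ / √t) ^ 2) ^ 2 by ring, hsq]
        field_simp

theorem tendsto_cos_div_sqrt_pow (τ : ℝ) :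
    Tendsto (fun m : ℕ => cos (τ / √m) ^ m) atTop (𝓝 (exp (-τ ^ 2 / 2))) := by
  simpa using tendsto_one_add_pow_exp_of_tendsto
    ((tendsto_mul_cos_div_sqrt_sub_one τ).comp tendsto_natCast_atTop_atTop)

end Real

theorem stmt_5 (τ : ℝ) :
    Tendsto
      (fun n : ℕ =>
        (1 / Real.sqrt ((n : ℝ) - 2)) * hDensity n (π / 2 + τ / Real.sqrt ((n : ℝ) - 2)))
      atTop (nhds ((1 / Real.sqrt (2 * π)) * Real.exp (-τ ^ 2 / 2))) := by
  have hGamma := (tendsto_Gamma_half_div_Gamma_half_sub_div_sqrt.comp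
    tendsto_natCast_atTop_atTop).const_mul (1 / √π)
  have hcos : Tendsto (fun n : ℕ => cos (τ / √((n : ℝ) - 2)) ^ (n - 2)) atTop
      (𝓝 (exp (-τ ^ 2 / 2))) := by
    rw [← tendsto_add_atTop_iff_nat 2]
    simpa using tendsto_cos_div_sqrt_pow τ
  convert hGamma.mul hcos using 2 with n
  · simp only [hDensity, Function.comp_apply, add_comm (π / 2), sin_add_pi_div_two]
    ring
  · rw [sqrt_mul zero_le_two]
    ring
end

section
/- Let α be a real number with 1 ≤ α < 2, let ρ_a, ρ_b > 0, M ≥ 0, and x ∈ ℝ, and set R = ρ_a²/ρ_b² + ρ_b²/ρ_a². Suppose x² ≥ (ρ_a² + ρ_b²) · log(1 + M) · α, and suppose s₁, s₂ are real numbers with (2 − α)·ρ_a² ≤ s₁ ≤ α·ρ_a² and (2 − α)·ρ_b² ≤ s₂ ≤ α·ρ_b². Then the Gaussian Bhattacharyya distance satisfies d(x; s₁, s₂) := (1/4)·[ x²/(s₁ + s₂) + log( (1/4)(s₁/s₂ + s₂/s₁) + 1/2 ) ] ≥ (1/4)·log(1 + M) + (1/4)·log( ((2 − α)/α)·(R/4)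 + 1/2 ). -/
open Real

theorem stmt_11 (α ρa ρb M x : ℝ) (hα1 : 1 ≤ α) (hα2 : α < 2)
    (hρa : 0 < ρa) (hρb : 0 < ρb) (hM : 0 ≤ M)
    (R : ℝ) (hR : R = ρa ^ 2 / ρb ^ 2 + ρb ^ 2 / ρa ^ 2)
    (hx : x ^ 2 ≥ (ρa ^ 2 + ρb ^ 2) * Real.log (1 + M) * α)
    (s₁ s₂ : ℝ)
    (hs₁l : (2 - α) * ρa ^ 2 ≤ s₁) (hs₁u : s₁ ≤ α * ρa ^ 2)
    (hs₂l : (2 - α) * ρb ^ 2 ≤ s₂) (hs₂u : s₂ ≤ α * ρb ^ 2) :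
    (1 / 4) * (x ^ 2 / (s₁ + s₂) + Real.log ((1 / 4) * (s₁ / s₂ + s₂ / s₁) + 1 / 2))
      ≥ (1 / 4) * Real.log (1 + M) + (1 / 4) * Real.log (((2 - α) / α) * (R / 4) + 1 / 2) := by
  have h2α : 0 < 2 - α := by linarith
  have hα0 : 0 < α := by linarith
  have hρa2 : 0 < ρa ^ 2 := by positivity
  have hρb2 : 0 < ρb ^ 2 := by positivity
  have hs₁ : 0 < s₁ := lt_of_lt_of_le (by positivity) hs₁l
  have hs₂ : 0 < s₂ := lt_of_lt_of_le (by positivity) hs₂l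
  have hlogM : 0 ≤ Real.log (1 + M) := Real.log_nonneg (by linarith)
  have h1 : x ^ 2 / (s₁ + s₂) ≥ Real.log (1 + M) := by
    rw [ge_iff_le, le_div_iff₀ (by linarith)]
    calc Real.log (1 + M) * (s₁ + s₂)
        ≤ Real.log (1 + M) * (α * (ρa ^ 2 + ρb ^ 2)) := by
          apply mul_le_mul_of_nonneg_left _ hlogM
          nlinarith
      _ ≤ x ^ 2 := by nlinarith [hx]
  have ha : (2 - α) * ρa ^ 2 / (α * ρb ^ 2) ≤ s₁ / s₂ :=
    div_le_div₀ hs₁.le hs₁l hs₂ hs₂u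
  have hb : (2 - α) * ρb ^ 2 / (α * ρa ^ 2) ≤ s₂ / s₁ :=
    div_le_div₀ hs₂.le hs₂l hs₁ hs₁u
  have hEq : ((2 - α) / α) * (R / 4) =
      (1 / 4) * ((2 - α) * ρa ^ 2 / (α * ρb ^ 2) + (2 - α) * ρb ^ 2 / (α * ρa ^ 2)) := by
    rw [hR]; field_simp
  have hpos : 0 < ((2 - α) / α) * (R / 4) + 1 / 2 := by
    have hR0 : 0 < R := by rw [hR]; positivity
    positivity
  have h2 : Real.log (((2 - α) / α) * (R / 4) + 1 / 2)
      ≤ Real.log ((1 / 4) * (s₁ / s₂ + s₂ / s₁) + 1 / 2) := by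
    apply Real.log_le_log hpos
    rw [hEq]; linarith
  linarith
end

section
/- Let M ≥ 0 and R ≥ 2 be real numbers, define ψ = ( √( (R−2)²(1+M)² + 32·R·(1+M) ) − (R−2)(1+M) ) / 8, assume ψ > 1, and let t be a real number with t ≥ 1 + 16/(log ψ)². Set α = e^{4/√(t−1)} and assume α < 2. Then (1/4)·log(1 + M) + (1/4)·log( ((2 − α)/α)·(R/4) + 1/2 ) ≥ 1/√(t−1). -/
open Real

theorem stmt_15 (M R : ℝ) (hM : 0 ≤ M) (hR : 2 ≤ R)
    (ψ : ℝ)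
    (hψ : ψ = (Real.sqrt ((R - 2) ^ 2 * (1 + M) ^ 2 + 32 * R * (1 + M)) -
      (R - 2) * (1 + M)) / 8)
    (hψ1 : 1 < ψ)
    (t : ℝ) (ht : 1 + 16 / (Real.log ψ) ^ 2 ≤ t)
    (α : ℝ) (hα : α = Real.exp (4 / Real.sqrt (t - 1))) (hα2 : α < 2) :
    (1 / 4) * Real.log (1 + M) + (1 / 4) * Real.log (((2 - α) / α) * (R / 4) + 1 / 2)
      ≥ 1 / Real.sqrt (t - 1) := by
  have hM1 : (0:ℝ) < 1 + M := by linarith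
  have hlψ : 0 < Real.log ψ := Real.log_pos hψ1
  have ht1 : 0 < t - 1 := by
    have h0 : 0 < 16 / (Real.log ψ) ^ 2 := by positivity
    linarith
  set s := Real.sqrt (t - 1) with hsdef
  have hs : 0 < s := Real.sqrt_pos.mpr ht1
  have hsge : 4 / Real.log ψ ≤ s := by
    have h1 : Real.sqrt (16 / (Real.log ψ) ^ 2) = 4 / Real.log ψ := by
      rw [show (16:ℝ) / (Real.log ψ) ^ 2 = (4 / Real.log ψ) ^ 2 by ring]
      exact Real.sqrt_sq (by positivity)
    rw [hsdef, ← h1]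
    exact Real.sqrt_le_sqrt (by linarith)
  have h4 : (4:ℝ) ≤ s * Real.log ψ := (div_le_iff₀ hlψ).mp hsge
  have hds : 4 / s ≤ Real.log ψ := (div_le_iff₀ hs).mpr (by nlinarith)
  have hαψ : α ≤ ψ := by
    rw [hα]
    calc Real.exp (4 / s) ≤ Real.exp (Real.log ψ) := Real.exp_le_exp.mpr hds
      _ = ψ := Real.exp_log (by linarith)
  have hα1 : 1 < α := by
    rw [hα, show (1:ℝ) = Real.exp 0 by simp]
    exact Real.exp_lt_exp.mpr (by positivity)
  have hαpos : 0 < α := by linarith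
  have hDnn : 0 ≤ (R - 2) ^ 2 * (1 + M) ^ 2 + 32 * R * (1 + M) := by nlinarith
  have h8 : 8 * ψ + (R - 2) * (1 + M) = Real.sqrt ((R - 2) ^ 2 * (1 + M) ^ 2 + 32 * R * (1 + M)) := by
    rw [hψ]; ring
  have hsq : (8 * ψ + (R - 2) * (1 + M)) ^ 2 = (R - 2) ^ 2 * (1 + M) ^ 2 + 32 * R * (1 + M) := by
    rw [h8]; exact Real.sq_sqrt hDnn
  have hkey : 4 * ψ ^ 2 + (R - 2) * (1 + M) * ψ = 2 * R * (1 + M) := by linear_combination hsq / 16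
  have hb : 0 ≤ (R - 2) * (1 + M) := by nlinarith
  have hquad : 4 * α ^ 2 ≤ (1 + M) * (2 * R - α * (R - 2)) := by
    nlinarith [mul_nonneg (sub_nonneg.mpr hαψ) hb, sq_nonneg (ψ - α), mul_pos hαpos hs]
  have hXeq : ((2 - α) / α) * (R / 4) + 1 / 2 = (2 * R - α * (R - 2)) / (4 * α) := by
    field_simp; ring
  have hX : α ≤ (1 + M) * (((2 - α) / α) * (R / 4) + 1 / 2) := by
    rw [hXeq, show (1 + M) * ((2 * R - α * (R - 2)) / (4 * α)) =
      ((1 + M) * (2 * R - α * (R - 2))) / (4 * α) by ring,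
      le_div_iff₀ (by positivity)]
    calc α * (4 * α) = 4 * α ^ 2 := by ring
      _ ≤ _ := hquad
  have h2α : 0 < 2 - α := by linarith
  have hXpos : 0 < ((2 - α) / α) * (R / 4) + 1 / 2 := by
    have h0 : 0 ≤ (2 - α) / α * (R / 4) :=
      mul_nonneg (div_nonneg h2α.le hαpos.le) (by linarith)
    linarith
  have hlog : 4 / s ≤ Real.log (1 + M) + Real.log (((2 - α) / α) * (R / 4) + 1 / 2) := by
    rw [← Real.log_mul (ne_of_gt hM1) (ne_of_gt hXpos)]
    calc 4 / s = Real.log α := by rw [hα, Real.log_exp]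
      _ ≤ _ := Real.log_le_log hαpos hX
  have h14 : (1:ℝ) / s = (4 / s) / 4 := by ring
  linarith
end
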